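/- (Recurrence) For every nonnegative integer n, S_{n+1}^{(r,k)}(x|a_1,…,a_r) = x·S_n^{(r,k)}(x|a_1,…,a_r) − (1/(n+1)) Σ_{j=1}^r Σ_{l=0}^n C(n+1,l) (−a_j)^{n+1−l} B_{n+1−l} S_l^{(r,k)}(x|a_1,…,a_r) − (1/(n+1)) ( S_{n+1}^{(r+1,k)}(x|a_1,…,a_r,1) − S_{n+1}^{(r+1,k−1)}(x|a_1,…,a_r,1) ), where B_m is the m-th ordinary Bernoulli number. -/

import Mathlib

/-!
Let `G = ∑ Sₙ tⁿ/n!` and `θ = t·d/dt`. Apply the derivation `θ` to the defining identity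
`tʳ Li_k(1 - e^{-t}) e^{xt} = ∏ⱼ (e^{aⱼt} - 1) · (1 - e^{-t}) · G`. Every factor has an explicit
logarithmic derivative: `θ (e^{at} - 1) = (a t e^{at}/(e^{at} - 1)) (e^{at} - 1)`, and by the chain
rule `(1 - e^{-t}) θ Li_k(1 - e^{-t}) = t e^{-t} Li_{k-1}(1 - e^{-t})`. The new factor
`t e^{-t}/(1 - e^{-t}) = t/(e^t - 1)` is exactly what turns `G` into the generating functions of
`S^{(r+1,k)}` and `S^{(r+1,k-1)}`, so `θ G` is a combination of `G`, `xtG`,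
`G · ∑ⱼ aⱼt e^{aⱼt}/(e^{aⱼt} - 1)` and those two series. Since
`a t e^{at}/(e^{at} - 1) = ∑ (-a)ᵐ Bₘ tᵐ/m!`, the coefficient of `t^{n+1}/(n+1)!` is the recurrence.
-/

open PowerSeries Finset

/-- The formal power series `e^{c·t}` over a commutative `ℚ`-algebra `R`. -/
noncomputable def expS {R : Type*} [CommRing R] [Algebra ℚ R] (c : R) : PowerSeries R :=
  PowerSeries.rescale c (PowerSeries.exp R)

/-- The formal power series `Li_k(1 - e^{-t})` over `ℂ`, where
`Li_k(z) = ∑_{m ≥ 1} z^m / m^k` is the `k`-th polylogarithm.  Since `1 - e^{-t}`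
has order `1`, the coefficient of `t^n` only involves the terms with `1 ≤ m ≤ n`. -/
noncomputable def Lik (k : ℤ) : PowerSeries ℂ :=
  PowerSeries.mk fun n => ∑ m ∈ Finset.Icc 1 n,
    ((m : ℂ) ^ k)⁻¹ * PowerSeries.coeff n ((1 - expS (-1 : ℂ)) ^ m)

/-- The exponential generating function `∑_n p n · t^n / n!` of a sequence of
complex polynomials. -/
noncomputable def egf (p : ℕ → Polynomial ℂ) : PowerSeries (Polynomial ℂ) :=
  PowerSeries.mk fun n => ((n.factorial : ℂ))⁻¹ • p n

namespace Derivation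

variable {R A : Type*} [CommSemiring R] [CommSemiring A] [Algebra R A] (D : Derivation R A A)

theorem map_prod_of_eq_mul {ι : Type*} (s : Finset ι) {f g : ι → A}
    (h : ∀ i ∈ s, D (f i) = g i * f i) : D (∏ i ∈ s, f i) = (∑ i ∈ s, g i) * ∏ i ∈ s, f i := by
  classical
  induction s using Finset.induction_on with
  | empty => simp
  | insert i s hi ih =>
    rw [Finset.prod_insert hi, Finset.sum_insert hi, leibniz, smul_eq_mul, smul_eq_mul,
      ih fun j hj => h j (Finset.mem_insert_of_mem hj), h i (Finset.mem_insert_self i s)]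
    ring

theorem map_pow_of_eq_mul {a g : A} (h : D a = g * a) (n : ℕ) : D (a ^ n) = (n * g) * a ^ n := by
  simpa using D.map_prod_of_eq_mul (Finset.range n) (fun _ _ => h)

end Derivation

section eulerOp

variable (R : Type*) [CommRing R]

noncomputable def eulerOp : Derivation R R⟦X⟧ R⟦X⟧ := (X : R⟦X⟧) • derivative R

variable {R}

theorem eulerOp_apply (f : R⟦X⟧) : eulerOp R f = X * d⁄dX R f := rfl

theorem coeff_eulerOp (f : R⟦X⟧) (n : ℕ) : coeff n (eulerOp R f) = n * coeff n f := by
  rcases n with _ | n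
  · simp [eulerOp_apply]
  · rw [eulerOp_apply, coeff_succ_X_mul, coeff_derivative, mul_comm]; push_cast; rfl

theorem eulerOp_X_pow (n : ℕ) : eulerOp R (X ^ n) = (n : R⟦X⟧) * X ^ n := by
  rw [(eulerOp R).map_pow_of_eq_mul (g := 1)
    (by rw [eulerOp_apply, derivative_X, mul_one, one_mul]), mul_one]

theorem map_eulerOp {S : Type*} [CommRing S] (f : R →+* S) (g : R⟦X⟧) :
    map f (eulerOp R g) = eulerOp S (map f g) := by
  ext n
  simp [coeff_eulerOp]

end eulerOp

section expS

variable {R : Type*} [CommRing R] [Algebra ℚ R]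

theorem expS_add (c d : R) : expS (c + d) = expS c * expS d :=
  (exp_mul_exp_eq_exp_add c d).symm

theorem expS_zero : expS (0 : R) = 1 := by
  simp [expS]

theorem constantCoeff_expS (c : R) : constantCoeff (expS c) = 1 := by
  simp [expS, ← coeff_zero_eq_constantCoeff_apply]

theorem expS_sub_one_ne_zero {c : R} (hc : c ≠ 0) : expS c - 1 ≠ 0 := by
  intro h
  apply hc
  simpa [expS, coeff_exp] using congrArg (coeff 1) h

theorem derivative_expS (c : R) : d⁄dX R (expS c) = C c * expS c := by
  rw [expS, rescale_eq_subst, derivative_subst (HasSubst.smul_X' c), derivative_exp,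
    Derivation.map_smul, derivative_X, ← rescale_eq_subst, smul_eq_C_mul, mul_one, mul_comm]

theorem eulerOp_expS (c : R) : eulerOp R (expS c) = (C c * X) * expS c := by
  rw [eulerOp_apply, derivative_expS]; ring

theorem map_expS {S : Type*} [CommRing S] [Algebra ℚ S] (f : R →+* S) (c : R) :
    map f (expS c) = expS (f c) := by
  ext n
  simp [expS, coeff_exp]

end expS

section bernoulli

variable {R : Type*} [CommRing R] [Algebra ℚ R]

theorem eulerOp_expS_sub_one (c : R) :
    eulerOp R (expS c - 1) = rescale c (bernoulli'PowerSeries R) * (expS c - 1) := by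
  have h := congrArg (rescale c) (bernoulli'PowerSeries_mul_exp_sub_one R)
  rw [map_mul, map_sub, map_one, map_mul, rescale_X] at h
  rw [Derivation.map_sub, Derivation.map_one_eq_zero, sub_zero, eulerOp_expS, expS, h]

theorem eulerOp_prod_expS_sub_one {ι : Type*} (s : Finset ι) (c : ι → R) :
    eulerOp R (∏ i ∈ s, (expS (c i) - 1))
      = (∑ i ∈ s, rescale (c i) (bernoulli'PowerSeries R)) * ∏ i ∈ s, (expS (c i) - 1) :=
  (eulerOp R).map_prod_of_eq_mul s fun i _ => eulerOp_expS_sub_one (c i)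

end bernoulli

section polylog

noncomputable def polylogSeries (k : ℤ) : ℂ⟦X⟧ :=
  mk fun m => if m = 0 then 0 else ((m : ℂ) ^ k)⁻¹

theorem constantCoeff_one_sub_expS_neg_one : constantCoeff (1 - expS (-1 : ℂ)) = 0 := by
  rw [map_sub, map_one, constantCoeff_expS, sub_self]

theorem hasSubst_one_sub_expS_neg_one : HasSubst (1 - expS (-1 : ℂ)) :=
  HasSubst.of_constantCoeff_zero' constantCoeff_one_sub_expS_neg_one

theorem Lik_eq_subst (k : ℤ) : Lik k = (polylogSeries k).subst (1 - expS (-1 : ℂ)) := by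
  obtain ⟨v, hv⟩ := X_dvd_iff.mpr constantCoeff_one_sub_expS_neg_one
  ext n
  have hsupp : (Function.support fun m => coeff m (polylogSeries k) •
      coeff n ((1 - expS (-1 : ℂ)) ^ m)) ⊆ ↑(Finset.Icc 1 n) := by
    intro m hm
    rw [Function.mem_support] at hm
    rw [Finset.coe_Icc, Set.mem_Icc]
    constructor
    · by_contra! h
      simp_all [polylogSeries]
    · by_contra! h
      simp_all [mul_pow, coeff_X_pow_mul', not_le.mpr h]
  rw [coeff_subst' hasSubst_one_sub_expS_neg_one, finsum_eq_sum_of_support_subset _ hsupp, Lik,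
    coeff_mk]
  refine Finset.sum_congr rfl fun m hm => ?_
  rw [polylogSeries, coeff_mk, if_neg (by grind), smul_eq_mul]

theorem eulerOp_polylogSeries (k : ℤ) : eulerOp ℂ (polylogSeries k) = polylogSeries (k - 1) := by
  ext n
  simp only [coeff_eulerOp, polylogSeries, coeff_mk]
  split_ifs with hn
  · rw [mul_zero]
  · rw [zpow_sub_one₀ (Nat.cast_ne_zero.mpr hn), mul_inv, inv_inv, mul_comm]

theorem eulerOp_Lik (k : ℤ) :
    (1 - expS (-1 : ℂ)) * eulerOp ℂ (Lik k) = X * expS (-1 : ℂ) * Lik (k - 1) := by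
  have hu := hasSubst_one_sub_expS_neg_one
  rw [Lik_eq_subst, Lik_eq_subst, eulerOp_apply, derivative_subst hu, ← eulerOp_polylogSeries,
    eulerOp_apply, subst_mul hu, subst_X hu, Derivation.map_sub, Derivation.map_one_eq_zero,
    derivative_expS]
  simp only [map_neg, map_one]
  ring

end polylog

section mixedType

variable {R : Type*} [CommRing R] [IsDomain R] [Algebra ℚ R]

theorem eulerOp_eq_of_generatingFunctions {r : ℕ} {x : R} {L L' P B G H H' : R⟦X⟧}
    (hL : (1 - expS (-1 : R)) * eulerOp R L = X * expS (-1 : R) * L')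
    (hP : eulerOp R P = B * P) (hP0 : P ≠ 0)
    (hG : X ^ r * L * expS x = P * (1 - expS (-1 : R)) * G)
    (hH : X ^ (r + 1) * L * expS x = P * (expS 1 - 1) * (1 - expS (-1 : R)) * H)
    (hH' : X ^ (r + 1) * L' * expS x = P * (expS 1 - 1) * (1 - expS (-1 : R)) * H') :
    eulerOp R G = ((r : R⟦X⟧) + C x * X) * G - G * B + H' - H := by
  set E := expS (-1 : R)
  set u := 1 - E
  have hu : u ≠ 0 :=
    sub_ne_zero.mpr (Ne.symm (sub_ne_zero.mp (expS_sub_one_ne_zero (neg_ne_zero.mpr one_ne_zero))))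
  have hEW : E * (expS 1 - 1) = u := by
    rw [mul_sub, ← expS_add, neg_add_cancel, expS_zero, mul_one]
  have hθu : eulerOp R u = X * E := by
    rw [Derivation.map_sub, Derivation.map_one_eq_zero, eulerOp_expS, map_neg, map_one]
    ring
  have hθ := congrArg (eulerOp R) hG
  simp only [Derivation.leibniz, smul_eq_mul, eulerOp_X_pow, eulerOp_expS, hθu, hP] at hθ
  -- the equation for `θ G` holds after multiplication by `P (1 - e^{-t})²`
  refine mul_left_cancel₀ (mul_ne_zero (mul_ne_zero hP0 hu) hu) ?_
  linear_combination -u * hθ + u * ((r : R⟦X⟧) + C x * X) * hG + X ^ r * expS x * hL + E * hH'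
    + P * u * H' * hEW + E * X * hG - E * hH - P * u * H * hEW

end mixedType

section egf

theorem coeff_egf (p : ℕ → Polynomial ℂ) (n : ℕ) :
    coeff n (egf p) = (n.factorial : ℂ)⁻¹ • p n :=
  coeff_mk _ _

theorem egf_injective : Function.Injective egf := by
  intro p q h
  funext n
  have hn := congrArg (coeff n) h
  rw [coeff_egf, coeff_egf] at hn
  exact smul_right_injective _ (inv_ne_zero (Nat.cast_ne_zero.mpr n.factorial_ne_zero)) hn

theorem egf_add_egf (p q : ℕ → Polynomial ℂ) : egf p + egf q = egf fun n => p n + q n := by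
  ext n : 1
  simp [coeff_egf]

theorem egf_sub_egf (p q : ℕ → Polynomial ℂ) : egf p - egf q = egf fun n => p n - q n := by
  ext n : 1
  simp [coeff_egf, smul_sub]

theorem sum_egf {ι : Type*} (s : Finset ι) (p : ι → ℕ → Polynomial ℂ) :
    ∑ i ∈ s, egf (p i) = egf fun n => ∑ i ∈ s, p i n := by
  ext n : 1
  simp [coeff_egf, map_sum, Finset.smul_sum]

theorem C_mul_egf (c : Polynomial ℂ) (p : ℕ → Polynomial ℂ) :
    C c * egf p = egf fun n => c * p n := by
  ext n : 1
  rw [coeff_C_mul, coeff_egf, coeff_egf, mul_smul_comm]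

theorem X_mul_egf (p : ℕ → Polynomial ℂ) : X * egf p = egf fun n => n * p (n - 1) := by
  ext n : 1
  rcases n with _ | n
  · simp [coeff_egf]
  · rw [coeff_succ_X_mul, coeff_egf, coeff_egf, Nat.add_sub_cancel, Nat.factorial_succ,
      Polynomial.smul_eq_C_mul, Polynomial.smul_eq_C_mul, ← map_natCast Polynomial.C,
      ← mul_assoc, ← Polynomial.C_mul]
    congr 2
    push_cast
    field_simp

theorem eulerOp_egf (p : ℕ → Polynomial ℂ) : eulerOp _ (egf p) = egf fun n => n * p n := by
  ext n : 1
  rw [coeff_eulerOp, coeff_egf, coeff_egf, mul_smul_comm]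

theorem egf_mul_egf (p q : ℕ → Polynomial ℂ) :
    egf p * egf q
      = egf fun n => ∑ l ∈ Finset.range (n + 1), (n.choose l : Polynomial ℂ) * p l * q (n - l) := by
  ext n : 1
  rw [coeff_mul, Finset.Nat.sum_antidiagonal_eq_sum_range_succ_mk, coeff_egf, Finset.smul_sum]
  refine Finset.sum_congr rfl fun l hl => ?_
  have hl : l ≤ n := Nat.lt_succ_iff.mp (Finset.mem_range.mp hl)
  simp only [coeff_egf, Polynomial.smul_eq_C_mul, ← map_natCast Polynomial.C]
  have hfac : ((l.factorial : ℂ))⁻¹ * ((n - l).factorial : ℂ)⁻¹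
      = (n.factorial : ℂ)⁻¹ * (n.choose l : ℂ) := by
    have : (n.factorial : ℂ) ≠ 0 := Nat.cast_ne_zero.mpr n.factorial_ne_zero
    rw [Nat.cast_choose ℂ hl]
    field_simp
  have hfacC := congrArg Polynomial.C hfac
  rw [map_mul, map_mul] at hfacC
  linear_combination (p l * q (n - l)) * hfacC

theorem rescale_bernoulli'PowerSeries_eq_egf (a : ℂ) :
    rescale (Polynomial.C a) (bernoulli'PowerSeries (Polynomial ℂ))
      = egf fun m => Polynomial.C (a ^ m * bernoulli' m) := by
  ext m : 1
  rw [coeff_rescale, bernoulli'PowerSeries, coeff_mk, coeff_egf, Polynomial.smul_eq_C_mul,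
    Polynomial.algebraMap_apply, ← Polynomial.C_pow, ← Polynomial.C_mul, ← Polynomial.C_mul]
  congr 1
  simp only [eq_ratCast, Rat.cast_div, Rat.cast_natCast]
  ring

end egf

theorem neg_pow_mul_bernoulli (a : ℂ) (m : ℕ) :
    (-a) ^ m * (bernoulli m : ℂ) = a ^ m * bernoulli' m := by
  rw [bernoulli, neg_pow]
  push_cast
  have hsq : ((-1 : ℂ) ^ m) ^ 2 = 1 := by rw [← pow_mul, mul_comm, pow_mul, neg_one_sq, one_pow]
  linear_combination a ^ m * (bernoulli' m : ℂ) * hsq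

theorem recurrence_of_eulerOp_coeff {r : ℕ} {a : Fin r → ℂ} {S T T' : ℕ → Polynomial ℂ}
    (h : ∀ m : ℕ, (m : Polynomial ℂ) * S m
      = (r : Polynomial ℂ) * S m + Polynomial.X * ((m : Polynomial ℂ) * S (m - 1))
      - ∑ j, ∑ l ∈ Finset.range (m + 1),
          (m.choose l : Polynomial ℂ) * S l * Polynomial.C (a j ^ (m - l) * bernoulli' (m - l))
      + T' m - T m)
    (n : ℕ) :
    S (n + 1) = Polynomial.X * S n
      - Polynomial.C (((n : ℂ) + 1))⁻¹
        * (∑ j : Fin r, ∑ l ∈ Finset.range (n + 1),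
            Polynomial.C (((n + 1).choose l : ℂ) * (-(a j)) ^ (n + 1 - l)
              * ((bernoulli (n + 1 - l) : ℚ) : ℂ)) * S l)
      - Polynomial.C (((n : ℂ) + 1))⁻¹ * (T (n + 1) - T' (n + 1)) := by
  have hterm : ∀ j, ∀ l ∈ Finset.range (n + 1), ((n + 1).choose l : Polynomial ℂ) * S l
      * Polynomial.C (a j ^ (n + 1 - l) * bernoulli' (n + 1 - l))
      = Polynomial.C (((n + 1).choose l : ℂ) * (-(a j)) ^ (n + 1 - l)
              * ((bernoulli (n + 1 - l) : ℚ) : ℂ)) * S l := by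
    intro j l _
    rw [mul_assoc _ ((-(a j)) ^ _), neg_pow_mul_bernoulli]
    simp only [map_mul, map_natCast]
    ring
  have hrec := h (n + 1)
  simp only [Finset.sum_range_succ _ (n + 1), Nat.choose_self, Nat.sub_self, pow_zero,
    bernoulli'_zero, Nat.add_sub_cancel, Nat.cast_one, Rat.cast_one, mul_one, map_one, one_mul,
    Finset.sum_add_distrib, Finset.sum_const, Finset.card_univ, Fintype.card_fin,
    nsmul_eq_mul] at hrec
  rw [Finset.sum_congr rfl fun j _ => Finset.sum_congr rfl (hterm j),
    show ((n + 1 : ℕ) : Polynomial ℂ) = Polynomial.C ((n : ℂ) + 1) by simp] at hrec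
  have hn : Polynomial.C ((n : ℂ) + 1) * Polynomial.C ((n : ℂ) + 1)⁻¹ = 1 := by
    rw [← Polynomial.C_mul, mul_inv_cancel₀ (Nat.cast_add_one_ne_zero n), Polynomial.C_1]
  linear_combination Polynomial.C ((n : ℂ) + 1)⁻¹ * hrec - (S (n + 1) - Polynomial.X * S n) * hn

theorem stmt6_general (r : ℕ) (k : ℤ) (a : Fin r → ℂ) (ha : ∀ j, a j ≠ 0)
    (S T T' : ℕ → Polynomial ℂ)
    -- `S n` is the mixed-type polynomial `S_n^{(r,k)}(x|a_1,…,a_r)`: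
    (hS : (PowerSeries.X : PowerSeries (Polynomial ℂ)) ^ r
        * PowerSeries.map Polynomial.C (Lik k) * expS Polynomial.X
        = (∏ j, (expS (Polynomial.C (a j)) - 1)) * (1 - expS (-1 : Polynomial ℂ)) * egf S)
    -- `T n` is the mixed-type polynomial `S_n^{(r+1,k)}(x|a_1,…,a_r,1)`:
    (hT : (PowerSeries.X : PowerSeries (Polynomial ℂ)) ^ (r + 1)
        * PowerSeries.map Polynomial.C (Lik k) * expS Polynomial.X
        = (∏ j : Fin (r + 1), (expS (Polynomial.C ((Fin.snoc a 1 : Fin (r + 1) → ℂ) j)) - 1))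
          * (1 - expS (-1 : Polynomial ℂ)) * egf T)
    -- `T' n` is the mixed-type polynomial `S_n^{(r+1,k-1)}(x|a_1,…,a_r,1)`:
    (hT' : (PowerSeries.X : PowerSeries (Polynomial ℂ)) ^ (r + 1)
        * PowerSeries.map Polynomial.C (Lik (k - 1)) * expS Polynomial.X
        = (∏ j : Fin (r + 1), (expS (Polynomial.C ((Fin.snoc a 1 : Fin (r + 1) → ℂ) j)) - 1))
          * (1 - expS (-1 : Polynomial ℂ)) * egf T')
    (n : ℕ) :
    S (n + 1) = Polynomial.X * S n
      - Polynomial.C (((n : ℂ) + 1))⁻¹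
        * (∑ j : Fin r, ∑ l ∈ Finset.range (n + 1),
            Polynomial.C (((n + 1).choose l : ℂ) * (-(a j)) ^ (n + 1 - l)
              * ((bernoulli (n + 1 - l) : ℚ) : ℂ)) * S l)
      - Polynomial.C (((n : ℂ) + 1))⁻¹ * (T (n + 1) - T' (n + 1)) := by
  set P := ∏ j, (expS (Polynomial.C (a j)) - 1)
  have hsnoc : ∏ j : Fin (r + 1), (expS (Polynomial.C ((Fin.snoc a 1 : Fin (r + 1) → ℂ) j)) - 1)
      = P * (expS 1 - 1) := by
    simp [Fin.prod_univ_castSucc, P]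
  have hL := congrArg (PowerSeries.map Polynomial.C) (eulerOp_Lik k)
  simp only [map_mul, map_sub, map_one, map_X, map_expS, map_eulerOp, map_neg] at hL
  have hP0 : P ≠ 0 := Finset.prod_ne_zero_iff.mpr fun j _ =>
    expS_sub_one_ne_zero (Polynomial.C_ne_zero.mpr (ha j))
  have key := eulerOp_eq_of_generatingFunctions hL
    (eulerOp_prod_expS_sub_one _ _) hP0 hS (hsnoc ▸ hT) (hsnoc ▸ hT')
  rw [add_mul, mul_assoc, Finset.mul_sum] at key
  simp_rw [rescale_bernoulli'PowerSeries_eq_egf, egf_mul_egf] at key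
  rw [sum_egf, X_mul_egf, C_mul_egf, ← map_natCast (C (R := Polynomial ℂ)), C_mul_egf,
    eulerOp_egf, egf_add_egf, egf_sub_egf, egf_add_egf, egf_sub_egf] at key
  exact recurrence_of_eulerOp_coeff (congrFun (egf_injective key)) n

theorem stmt6 (r : ℕ) (hr : 0 < r) (k : ℤ) (a : Fin r → ℂ) (ha : ∀ j, a j ≠ 0)
    (S T T' : ℕ → Polynomial ℂ)
    -- `S n` is the mixed-type polynomial `S_n^{(r,k)}(x|a_1,…,a_r)`:
    (hS : (PowerSeries.X : PowerSeries (Polynomial ℂ)) ^ r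
        * PowerSeries.map Polynomial.C (Lik k) * expS Polynomial.X
        = (∏ j, (expS (Polynomial.C (a j)) - 1)) * (1 - expS (-1 : Polynomial ℂ)) * egf S)
    -- `T n` is the mixed-type polynomial `S_n^{(r+1,k)}(x|a_1,…,a_r,1)`:
    (hT : (PowerSeries.X : PowerSeries (Polynomial ℂ)) ^ (r + 1)
        * PowerSeries.map Polynomial.C (Lik k) * expS Polynomial.X
        = (∏ j : Fin (r + 1), (expS (Polynomial.C ((Fin.snoc a 1 : Fin (r + 1) → ℂ) j)) - 1))
          * (1 - expS (-1 : Polynomial ℂ)) * egf T)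
    -- `T' n` is the mixed-type polynomial `S_n^{(r+1,k-1)}(x|a_1,…,a_r,1)`:
    (hT' : (PowerSeries.X : PowerSeries (Polynomial ℂ)) ^ (r + 1)
        * PowerSeries.map Polynomial.C (Lik (k - 1)) * expS Polynomial.X
        = (∏ j : Fin (r + 1), (expS (Polynomial.C ((Fin.snoc a 1 : Fin (r + 1) → ℂ) j)) - 1))
          * (1 - expS (-1 : Polynomial ℂ)) * egf T')
    (n : ℕ) :
    S (n + 1) = Polynomial.X * S n
      - Polynomial.C (((n : ℂ) + 1))⁻¹
        * (∑ j : Fin r, ∑ l ∈ Finset.range (n + 1),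
            Polynomial.C (((n + 1).choose l : ℂ) * (-(a j)) ^ (n + 1 - l)
              * ((bernoulli (n + 1 - l) : ℚ) : ℂ)) * S l)
      - Polynomial.C (((n : ℂ) + 1))⁻¹ * (T (n + 1) - T' (n + 1)) :=
  stmt6_general r k a ha S T T' hS hT hT' n
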